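/- Left application is compatible with composition up to failures equivalence: ⟨P | (Q ; R)⟩ ≈_f ⟨⟨P | Q⟩ | R⟩ for all processes P, Q, R. -/

import Mathlib

set_option linter.unnecessarySeqFocus false

/-! # CCS with simultaneous actions (Abramsky, "Process Realizability") -/

/-- Labels: names (`inl`) and co-names (`inr`). -/
abbrev Label : Type := ℕ ⊕ ℕ

/-- The involution `λ ↦ λ̄` exchanging names and co-names. -/
def Label.bar : Label → Label
  | .inl n => .inr n
  | .inr n => .inl n

/-- Actions: finite sets of labels, performed simultaneously.  `τ = ∅`. -/
abbrev Act : Type := Finset Label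

/-- A renaming: a partial injective function on labels preserving the involution. -/
structure Renaming where
  toFun : Label → Option Label
  inj : ∀ ⦃x y z : Label⦄, toFun x = some z → toFun y = some z → x = y
  bar : ∀ x : Label, toFun (Label.bar x) = (toFun x).map Label.bar

/-- The pointwise extension of a renaming to actions. -/
def Renaming.onAction (f : Renaming) (a : Act) : Act :=
  a.filterMap f.toFun (fun _ _ _ hx hy => f.inj (Option.mem_def.mp hx) (Option.mem_def.mp hy))

/-- Guarded process terms of CCS with simultaneous actions:
prefix, countably-indexed guarded sums (all guards non-`τ`), parallel composition,
restriction, renaming, process variables (de Bruijn) and recursion. -/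
inductive Proc : Type where
  | pre (a : Act) (P : Proc)
  | sum (I : Set ℕ) (act : ℕ → Act) (cont : ℕ → Proc) (hg : ∀ n ∈ I, (act n).Nonempty)
  | par (P Q : Proc)
  | restrict (P : Proc) (L : Set Label)
  | rename (P : Proc) (f : Renaming)
  | var (n : ℕ)
  | fix (P : Proc)

/-- The inactive process `0` (the empty sum). -/
def Proc.nil : Proc := .sum ∅ (fun _ => ∅) (fun _ => .var 0) (by simp)

/-- Substitution of a process for the variable with de Bruijn index `d`. -/
def Proc.subst (R : Proc) : ℕ → Proc → Proc
  | d, .pre a P => .pre a (Proc.subst R d P)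
  | d, .sum I act cont hg => .sum I act (fun n => Proc.subst R d (cont n)) hg
  | d, .par P Q => .par (Proc.subst R d P) (Proc.subst R d Q)
  | d, .restrict P L => .restrict (Proc.subst R d P) L
  | d, .rename P f => .rename (Proc.subst R d P) f
  | d, .var n => if n = d then R else .var n
  | d, .fix P => .fix (Proc.subst R (d + 1) P)

/-- The labelled transition relation, with the generalized synchronization rule
for simultaneous (compound) actions. -/
inductive Step : Proc → Act → Proc → Prop where
  | pre {a P} : Step (.pre a P) a P
  | sum {I act cont hg} (j : ℕ) (hj : j ∈ I) : Step (.sum I act cont hg) (act j) (cont j)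
  | restrict {P a Q L} : Step P a Q → (∀ l ∈ a, l ∉ L ∧ Label.bar l ∉ L) →
      Step (.restrict P L) a (.restrict Q L)
  | rename {P a Q} {f : Renaming} : Step P a Q → (∀ l ∈ a, (f.toFun l).isSome) →
      Step (.rename P f) (f.onAction a) (.rename Q f)
  | fix {P a Q} : Step (Proc.subst (.fix P) 0 P) a Q → Step (.fix P) a Q
  | parL {P a P' Q} : Step P a P' → Step (.par P Q) a (.par P' Q)
  | parR {P Q a Q'} : Step Q a Q' → Step (.par P Q) a (.par P Q')
  | sync {P Q P' Q' a b c} : Step P (a ∪ b) P' → Step Q (b.image Label.bar ∪ c) Q' →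
      Disjoint a b → Disjoint (b.image Label.bar) c → Disjoint a c →
      Step (.par P Q) (a ∪ c) (.par P' Q')

/-- Zero or more silent (`τ`) transitions. -/
def TauStar : Proc → Proc → Prop :=
  Relation.ReflTransGen (fun P Q => Step P ∅ Q)

/-- Observable transition `P ⟹a Q`: `τ* a τ*`. -/
def Obs (P : Proc) (a : Act) (Q : Proc) : Prop :=
  ∃ P₁ P₂, TauStar P P₁ ∧ Step P₁ a P₂ ∧ TauStar P₂ Q

/-- Observable transitions along a string of (non-`τ`) actions. -/
inductive ObsSeq : Proc → List Act → Proc → Prop where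
  | nil {P Q} : TauStar P Q → ObsSeq P [] Q
  | cons {P a Q s R} : Obs P a Q → ObsSeq Q s R → ObsSeq P (a :: s) R

/-- The failures of a process: pairs `(s, X)` with `s` a string of nonempty actions and
`X` a set of nonempty actions such that `P ⟹s Q` for some `Q` refusing every action of `X`. -/
def failures (P : Proc) : Set (List Act × Set Act) :=
  { sX | (∀ a ∈ sX.1, a.Nonempty) ∧ (∀ a ∈ sX.2, a.Nonempty) ∧
      ∃ Q, ObsSeq P sX.1 Q ∧ ∀ a ∈ sX.2, ¬∃ R, Obs Q a R }

/-- Failures equivalence. -/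
def FailEq (P Q : Proc) : Prop := failures P = failures Q

/-- Weak simulations (with respect to the observable transitions). -/
def IsWeakSim (R : Proc → Proc → Prop) : Prop :=
  ∀ ⦃P Q⦄, R P Q →
    (∀ P', TauStar P P' → ∃ Q', TauStar Q Q' ∧ R P' Q') ∧
    (∀ a P', (a : Act).Nonempty → Obs P a P' → ∃ Q', Obs Q a Q' ∧ R P' Q')

/-- Weak bisimilarity. -/
def WeakBisim (P Q : Proc) : Prop :=
  ∃ R : Proc → Proc → Prop, IsWeakSim R ∧ IsWeakSim (fun x y => R y x) ∧ R P Q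
/-! ## The split name space and the basic combinators -/

/-- Build a bar-preserving partial injective renaming from a partial injective map on names. -/
def Renaming.ofNameFun (f : ℕ → Option ℕ)
    (hf : ∀ ⦃x y z : ℕ⦄, f x = some z → f y = some z → x = y) : Renaming where
  toFun := fun l =>
    match l with
    | .inl n => (f n).map .inl
    | .inr n => (f n).map .inr
  inj := by
    rintro (x | x) (y | y) (z | z) hx hy <;>
      simp only [Option.map_eq_some_iff] at hx hy <;>
      obtain ⟨a, ha, ha'⟩ := hx <;> obtain ⟨b, hb, hb'⟩ := hy <;>
        solve
          | (cases ha'; cases hb'; exact congrArg _ (hf ha hb))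
          | (cases hb')
          | (cases ha')
  bar := by
    rintro (n | n) <;> cases hf : f n <;> simp [Label.bar, hf]

/-- The underlying name of a label. -/
def Label.name : Label → ℕ := Sum.elim id id

/-- The injection `l` of the name space onto its "left" half (even names). -/
def lRen : Renaming := Renaming.ofNameFun (fun n => some (2 * n)) (by intro x y z hx hy; simp only [Option.some.injEq] at hx hy; omega)

/-- The injection `r` of the name space onto its "right" half (odd names). -/
def rRen : Renaming := Renaming.ofNameFun (fun n => some (2 * n + 1)) (by intro x y z hx hy; simp only [Option.some.injEq] at hx hy; omega)

/-- The partial inverse `l⁻¹` of `l`. -/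
def lInv : Renaming :=
  Renaming.ofNameFun (fun n => if n % 2 = 0 then some (n / 2) else none)
    (by intro x y z hx hy; try dsimp only at hx hy
        split at hx <;> split at hy <;> simp_all <;> omega)

/-- The partial inverse `r⁻¹` of `r`. -/
def rInv : Renaming :=
  Renaming.ofNameFun (fun n => if n % 2 = 1 then some (n / 2) else none)
    (by intro x y z hx hy; try dsimp only at hx hy
        split at hx <;> split at hy <;> simp_all <;> omega)

/-- The left half `ℒ_l` of the label space. -/
def LabL : Set Label := {x | x.name % 2 = 0}

/-- The right half `ℒ_r` of the label space. -/
def LabR : Set Label := {x | x.name % 2 = 1}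

/-- Tensor product: disjoint (non-communicating) parallel composition `P[l] | Q[r]`. -/
def tensor (P Q : Proc) : Proc := .par (P.rename lRen) (Q.rename rRen)

/-- Left (forwards) application `⟨Q | P⟩ = ((Q[l] | P) ∖ ℒ_l)[r⁻¹]`. -/
def lapp (Q P : Proc) : Proc := ((Proc.par (Q.rename lRen) P).restrict LabL).rename rInv

/-- Right (reverse) application `(P | R⟩ = ((P | R[r]) ∖ ℒ_r)[l⁻¹]`. -/
def rapp (P R : Proc) : Proc := ((Proc.par P (R.rename rRen)).restrict LabR).rename lInv

/-! ### The three-fold decomposition `𝒩 = 𝒩₁ ∪̇ 𝒩₂ ∪̇ 𝒩₃` and composition -/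

/-- `φ₁₂ : 𝒩 ≅ 𝒩₁ ∪̇ 𝒩₂` (`𝒩ᵢ` = names `≡ i - 1 (mod 3)`), carrying `𝒩_l` onto `𝒩₁`, `𝒩_r` onto `𝒩₂`. -/
def phi12 : Renaming :=
  Renaming.ofNameFun (fun n => some (if n % 2 = 0 then 3 * (n / 2) else 3 * (n / 2) + 1))
    (by intro x y z hx hy; try dsimp only at hx hy
        simp only [Option.some.injEq] at hx hy
        split at hx <;> split at hy <;> omega)

/-- `φ₂₃ : 𝒩 ≅ 𝒩₂ ∪̇ 𝒩₃`, carrying `𝒩_l` onto `𝒩₂`, `𝒩_r` onto `𝒩₃`. -/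
def phi23 : Renaming :=
  Renaming.ofNameFun (fun n => some (if n % 2 = 0 then 3 * (n / 2) + 1 else 3 * (n / 2) + 2))
    (by intro x y z hx hy; try dsimp only at hx hy
        simp only [Option.some.injEq] at hx hy
        split at hx <;> split at hy <;> omega)

/-- The partial inverse `φ₁₃⁻¹` of `φ₁₃ : 𝒩 ≅ 𝒩₁ ∪̇ 𝒩₃`. -/
def phi13Inv : Renaming :=
  Renaming.ofNameFun
    (fun n => if n % 3 = 0 then some (2 * (n / 3)) else if n % 3 = 2 then some (2 * (n / 3) + 1) else none)
    (by intro x y z hx hy; try dsimp only at hx hy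
        split at hx <;> split at hy <;> simp_all <;> omega)

/-- The middle part `𝒩₂` of the label space (as a set of labels). -/
def Lab2 : Set Label := {x | x.name % 3 = 1}

/-- Composition `P ; Q = ((P[φ₁₂] | Q[φ₂₃]) ∖ 𝒩₂)[φ₁₃⁻¹]`. -/
def comp (P Q : Proc) : Proc :=
  ((Proc.par (P.rename phi12) (Q.rename phi23)).restrict Lab2).rename phi13Inv

/-! ### The identity (wire) process -/

/-- The identity process `I = rec X. Σ_{a ∈ Act₊} (l(a) ∪ r(a)‾).X`. -/
noncomputable def Iproc : Proc :=
  .fix (.sum {n | ∃ a : Act, (Encodable.decode n : Option Act) = some a ∧ a.Nonempty}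
    (fun n =>
      match (Encodable.decode n : Option Act) with
      | some a => lRen.onAction a ∪ (rRen.onAction a).image Label.bar
      | none => {Sum.inl 0})
    (fun _ => .var 0)
    (by rintro n ⟨a, ha, hne⟩
        simp only [ha]
        obtain ⟨x, hx⟩ := hne
        refine Finset.Nonempty.mono Finset.subset_union_left ⟨(Sum.map (2 * ·) (2 * ·)) x, ?_⟩
        simp only [Renaming.onAction, Finset.mem_filterMap]
        exact ⟨x, hx, by cases x <;> rfl⟩))

/-! ## Guarded choice combinators, the additive pairing and injections, `!P`, divergence -/

/-- Binary guarded sum `a.P + b.Q` (guards must be non-`τ`). -/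
def gsum2 (a : Act) (P : Proc) (b : Act) (Q : Proc) (ha : a.Nonempty) (hb : b.Nonempty) : Proc :=
  .sum {0, 1} (fun n => if n = 0 then a else b) (fun n => if n = 0 then P else Q)
    (by intro n _; (try dsimp only); split <;> assumption)

/-- Ternary guarded sum `a.P + b.Q + c.R`. -/
def gsum3 (a : Act) (P : Proc) (b : Act) (Q : Proc) (c : Act) (R : Proc)
    (ha : a.Nonempty) (hb : b.Nonempty) (hc : c.Nonempty) : Proc :=
  .sum {0, 1, 2} (fun n => if n = 0 then a else if n = 1 then b else c)
    (fun n => if n = 0 then P else if n = 1 then Q else R)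
    (by intro n _; (try dsimp only); split <;> [skip; split] <;> assumption)

/-- The distinguished names: `α = 0`, `β = 1`, `ω = 2`, `δ = 3`, `γ = 4`, `σ = 5`. -/
def αAct : Act := {Sum.inl 0}
def βAct : Act := {Sum.inl 1}
def αBar : Act := {Sum.inr 0}
def βBar : Act := {Sum.inr 1}
def ωAct : Act := {Sum.inl 2}
def δBar : Act := {Sum.inr 3}
def γBar : Act := {Sum.inr 4}

/-- The additive pairing `⟨P, Q⟩ = r(α).P + r(β).Q`  (`r(α) = 1`, `r(β) = 3`). -/
def pairR (P Q : Proc) : Proc :=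
  gsum2 {Sum.inl 1} P {Sum.inl 3} Q (Finset.singleton_nonempty _) (Finset.singleton_nonempty _)

/-- The plain additive pairing `α.P + β.Q` used in the realizability clauses for `&`. -/
def pairProc (P Q : Proc) : Proc :=
  gsum2 αAct P βAct Q (Finset.singleton_nonempty _) (Finset.singleton_nonempty _)

/-- The left injection `l(P) = l(α)‾.P`  (`l(α) = 0`). -/
def injl (P : Proc) : Proc := .pre {Sum.inr 0} P

/-- The right injection `r(Q) = r(β)‾.Q`  (`r(β) = 3`). -/
def injr (Q : Proc) : Proc := .pre {Sum.inr 3} Q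

/-- The exponential combinator `!P = rec X.(ω.0 + δ.P + γ.(X[l] | X[r]))`. -/
def bangProc (P : Proc) : Proc :=
  .fix (gsum3 ωAct Proc.nil ({Sum.inl 3} : Act) P ({Sum.inl 4} : Act)
    (.par (Proc.rename (.var 0) lRen) (Proc.rename (.var 0) rRen))
    (Finset.singleton_nonempty _) (Finset.singleton_nonempty _) (Finset.singleton_nonempty _))

/-- `P` diverges if there is an infinite sequence of `τ`-transitions from `P`. -/
def Diverges (P : Proc) : Prop :=
  ∃ f : ℕ → Proc, f 0 = P ∧ ∀ n, Step (f n) ∅ (f (n + 1))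

/-- `P ⊥ Q`: closing the system, `P` and `Q` interacting with each other yield no divergence. -/
def Orth (P Q : Proc) : Prop := ¬ Diverges ((Proc.par P Q).restrict Set.univ)

/-!
`lInv.onAction a` and `rInv.onAction a` are the left and right halves of an action `a`.
A move of `⟨A | B⟩` is a joint, possibly idle, move `u, v` of `A, B` with `lInv v = ū`,
showing `rInv v`; a move of `A ; B` is a joint move `u, v` with `lInv v = (rInv u)‾`, showing
`lInv u` on the left and `rInv v` on the right. Composing these conditions, the moves of
`⟨P | (Q ; R)⟩` and of `⟨⟨P | Q⟩ | R⟩` are the same joint moves `u, v, w` of `P, Q, R`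
(`lInv v = ū`, `lInv w = (rInv v)‾`, showing `rInv w`), and they lead to processes of the same
two shapes. So the two sides are strongly bisimilar, hence weakly bisimilar, hence failures
equivalent.
-/

@[simp] theorem Label.name_inl (n : ℕ) : Label.name (Sum.inl n) = n := rfl
@[simp] theorem Label.name_inr (n : ℕ) : Label.name (Sum.inr n) = n := rfl
@[simp] theorem Label.bar_bar (l : Label) : l.bar.bar = l := by cases l <;> rfl
@[simp] theorem Label.name_bar (l : Label) : l.bar.name = l.name := by cases l <;> rfl

@[simp] theorem Label.mem_image_bar {a : Act} {l : Label} :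
    l ∈ a.image Label.bar ↔ l.bar ∈ a := by
  rw [Finset.mem_image]
  exact ⟨by rintro ⟨k, hk, rfl⟩; simpa using hk, fun h => ⟨_, h, Label.bar_bar l⟩⟩

namespace Renaming

@[simp] theorem onAction_empty (f : Renaming) : f.onAction ∅ = ∅ := rfl

theorem onAction_injective {f : Renaming} (hf : ∀ l, (f.toFun l).isSome) :
    Function.Injective f.onAction := by
  intro a b hab
  ext l
  obtain ⟨m, hm⟩ := Option.isSome_iff_exists.1 (hf l)
  have key : ∀ c, l ∈ c ↔ m ∈ f.onAction c := fun c => by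
    simp only [onAction, Finset.mem_filterMap]
    exact ⟨fun h => ⟨l, h, hm⟩, fun ⟨k, hk, hkm⟩ => f.inj hkm hm ▸ hk⟩
  rw [key, key, hab]

theorem onAction_image_bar (f : Renaming) (a : Act) :
    f.onAction (a.image Label.bar) = (f.onAction a).image Label.bar := by
  ext l
  simp only [onAction, Finset.mem_filterMap, Label.mem_image_bar]
  constructor
  · rintro ⟨k, hk, hkl⟩
    refine ⟨k.bar, hk, ?_⟩
    rw [f.bar, hkl, Option.map_some]
  · rintro ⟨k, hk, hkl⟩
    refine ⟨k.bar, by simpa using hk, ?_⟩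
    rw [← Label.bar_bar l, ← Option.map_some, ← hkl, ← f.bar]

theorem isSome_ofNameFun_toFun {g : ℕ → Option ℕ} {hg} (l : Label) :
    ((ofNameFun g hg).toFun l).isSome = (g l.name).isSome := by
  cases l <;> simp [ofNameFun]

theorem mem_ofNameFun_onAction {g : ℕ → Option ℕ} {hg} {p : ℕ → Prop} {h : ℕ → ℕ}
    (hgh : ∀ k n, g k = some n ↔ p n ∧ k = h n) {a : Act} {l : Label} :
    l ∈ (ofNameFun g hg).onAction a ↔ p l.name ∧ Sum.map h h l ∈ a := by
  rcases l with n | n <;>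
    simp [onAction, Finset.mem_filterMap, ofNameFun, Sum.exists, Option.map_eq_some_iff, hgh,
      and_comm]

end Renaming

-- Membership in the image of an action, with the preimage of a name in closed form: identities
-- between actions then reduce to arithmetic on names.
@[simp] theorem mem_lRen_onAction {a : Act} {l : Label} :
    l ∈ lRen.onAction a ↔ l.name % 2 = 0 ∧ Sum.map (· / 2) (· / 2) l ∈ a := by
  refine Renaming.mem_ofNameFun_onAction (p := (· % 2 = 0)) fun k n => ?_
  rw [Option.some.injEq]; omega

@[simp] theorem mem_rRen_onAction {a : Act} {l : Label} :
    l ∈ rRen.onAction a ↔ l.name % 2 = 1 ∧ Sum.map (· / 2) (· / 2) l ∈ a := by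
  refine Renaming.mem_ofNameFun_onAction (p := (· % 2 = 1)) fun k n => ?_
  rw [Option.some.injEq]; omega

@[simp] theorem mem_lInv_onAction {a : Act} {l : Label} :
    l ∈ lInv.onAction a ↔ Sum.map (2 * ·) (2 * ·) l ∈ a := by
  refine (Renaming.mem_ofNameFun_onAction (p := fun _ => True) fun k n => ?_).trans
    (true_and _).to_iff
  split_ifs <;> simp only [Option.some.injEq, true_and, false_iff] <;> omega

@[simp] theorem mem_rInv_onAction {a : Act} {l : Label} :
    l ∈ rInv.onAction a ↔ Sum.map (2 * · + 1) (2 * · + 1) l ∈ a := by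
  refine (Renaming.mem_ofNameFun_onAction (p := fun _ => True) fun k n => ?_).trans
    (true_and _).to_iff
  split_ifs <;> simp only [Option.some.injEq, true_and, false_iff] <;> omega

@[simp] theorem mem_phi12_onAction {a : Act} {l : Label} :
    l ∈ phi12.onAction a ↔ l.name % 3 ≠ 2 ∧
      Sum.map (fun n => 2 * (n / 3) + n % 3) (fun n => 2 * (n / 3) + n % 3) l ∈ a := by
  refine Renaming.mem_ofNameFun_onAction (p := (· % 3 ≠ 2)) fun k n => ?_
  rw [Option.some.injEq]; split_ifs <;> omega

@[simp] theorem mem_phi23_onAction {a : Act} {l : Label} :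
    l ∈ phi23.onAction a ↔ l.name % 3 ≠ 0 ∧
      Sum.map (fun n => 2 * (n / 3) + n % 3 - 1) (fun n => 2 * (n / 3) + n % 3 - 1) l ∈ a := by
  refine Renaming.mem_ofNameFun_onAction (p := (· % 3 ≠ 0)) fun k n => ?_
  rw [Option.some.injEq]; split_ifs <;> omega

@[simp] theorem mem_phi13Inv_onAction {a : Act} {l : Label} :
    l ∈ phi13Inv.onAction a ↔
      Sum.map (fun n => 3 * (n / 2) + 2 * (n % 2)) (fun n => 3 * (n / 2) + 2 * (n % 2)) l ∈
        a := by
  refine (Renaming.mem_ofNameFun_onAction (p := fun _ => True) fun k n => ?_).trans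
    (true_and _).to_iff
  split_ifs <;> simp only [Option.some.injEq, true_and, false_iff] <;> omega

theorem lRen_toFun_isSome (l : Label) : (lRen.toFun l).isSome :=
  (Renaming.isSome_ofNameFun_toFun l).trans rfl

theorem phi12_toFun_isSome (l : Label) : (phi12.toFun l).isSome :=
  (Renaming.isSome_ofNameFun_toFun l).trans rfl

theorem phi23_toFun_isSome (l : Label) : (phi23.toFun l).isSome :=
  (Renaming.isSome_ofNameFun_toFun l).trans rfl

instance : DecidablePred (· ∈ LabL) := fun l => inferInstanceAs (Decidable (l.name % 2 = 0))
instance : DecidablePred (· ∈ Lab2) := fun l => inferInstanceAs (Decidable (l.name % 3 = 1))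

@[simp] theorem mem_LabL {l : Label} : l ∈ LabL ↔ l.name % 2 = 0 := Iff.rfl
@[simp] theorem mem_Lab2 {l : Label} : l ∈ Lab2 ↔ l.name % 3 = 1 := Iff.rfl

theorem rInv_toFun_isSome_of_notMem_LabL {l : Label} (hl : l ∉ LabL) :
    (rInv.toFun l).isSome := by
  refine (Renaming.isSome_ofNameFun_toFun l).trans ?_
  simp only [mem_LabL] at hl
  simp only [if_pos (show l.name % 2 = 1 by omega), Option.isSome_some]

theorem phi13Inv_toFun_isSome_of_notMem_Lab2 {l : Label} (hl : l ∉ Lab2) :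
    (phi13Inv.toFun l).isSome := by
  refine (Renaming.isSome_ofNameFun_toFun l).trans ?_
  simp only [mem_Lab2] at hl
  split_ifs <;> first | rfl | omega

theorem lInv_onAction_lRen_union_rRen (a b : Act) :
    lInv.onAction (lRen.onAction a ∪ rRen.onAction b) = a := by
  ext (n | n) <;> simp

theorem rInv_onAction_lRen_union_rRen (a b : Act) :
    rInv.onAction (lRen.onAction a ∪ rRen.onAction b) = b := by
  ext (n | n) <;> simp [Nat.mul_add_div]

theorem filter_mem_LabL_lRen (a : Act) :
    (lRen.onAction a).filter (· ∈ LabL) = lRen.onAction a := by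
  ext (n | n) <;> simp +contextual

theorem filter_notMem_LabL_lRen (a : Act) : (lRen.onAction a).filter (· ∉ LabL) = ∅ := by
  ext (n | n) <;> simp +contextual

theorem filter_mem_LabL (a : Act) : a.filter (· ∈ LabL) = lRen.onAction (lInv.onAction a) := by
  ext (n | n) <;> obtain ⟨k, rfl | rfl⟩ := Nat.even_or_odd' n <;> simp

theorem rInv_onAction_filter_notMem_LabL (a : Act) :
    rInv.onAction (a.filter (· ∉ LabL)) = rInv.onAction a := by
  ext (n | n) <;> simp

theorem filter_mem_Lab2_phi12 (a : Act) :
    (phi12.onAction a).filter (· ∈ Lab2) = phi23.onAction (lRen.onAction (rInv.onAction a)) := by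
  ext (n | n) <;>
    obtain ⟨k, rfl | rfl | rfl⟩ : ∃ k, n = 3 * k ∨ n = 3 * k + 1 ∨ n = 3 * k + 2 :=
      ⟨n / 3, by omega⟩ <;> simp +arith [Nat.mul_add_div]

theorem filter_mem_Lab2_phi23 (a : Act) :
    (phi23.onAction a).filter (· ∈ Lab2) = phi23.onAction (lRen.onAction (lInv.onAction a)) := by
  ext (n | n) <;>
    obtain ⟨k, rfl | rfl | rfl⟩ : ∃ k, n = 3 * k ∨ n = 3 * k + 1 ∨ n = 3 * k + 2 :=
      ⟨n / 3, by omega⟩ <;> simp +arith [Nat.mul_add_div]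

theorem disjoint_filter_notMem_Lab2_phi12_phi23 (a b : Act) :
    Disjoint ((phi12.onAction a).filter (· ∉ Lab2))
      ((phi23.onAction b).filter (· ∉ Lab2)) := by
  rw [Finset.disjoint_left]
  intro l hl hl'
  simp only [Finset.mem_filter, mem_phi12_onAction, mem_phi23_onAction, mem_Lab2] at hl hl'
  omega

theorem phi13Inv_onAction_filter_notMem_Lab2 (a b : Act) :
    phi13Inv.onAction
        ((phi12.onAction a).filter (· ∉ Lab2) ∪ (phi23.onAction b).filter (· ∉ Lab2)) =
      lRen.onAction (lInv.onAction a) ∪ rRen.onAction (rInv.onAction b) := by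
  ext (n | n) <;> obtain ⟨k, rfl | rfl⟩ := Nat.even_or_odd' n <;>
    simp +arith [Nat.mul_add_div]

def OptStep (X : Proc) : Option Act → Proc → Prop
  | none, Y => Y = X
  | some a, Y => Step X a Y

theorem step_rename_iff {X S : Proc} {f : Renaming} {a : Act} :
    Step (X.rename f) a S ↔
      ∃ b X', Step X b X' ∧ (∀ l ∈ b, (f.toFun l).isSome) ∧ a = f.onAction b ∧
        S = X'.rename f := by
  constructor
  · intro h
    cases h
    exact ⟨_, _, ‹_›, ‹_›, rfl, rfl⟩
  · rintro ⟨b, X', h, hb, rfl, rfl⟩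
    exact .rename h hb

theorem optStep_rename_iff {X S : Proc} {f : Renaming} {x : Option Act}
    (hf : ∀ l, (f.toFun l).isSome) :
    OptStep (X.rename f) x S ↔
      ∃ u X', OptStep X u X' ∧ x = u.map f.onAction ∧ S = X'.rename f := by
  cases x with
  | none =>
    constructor
    · rintro rfl
      exact ⟨none, X, rfl, rfl, rfl⟩
    · rintro ⟨_ | _, X', hX, h, rfl⟩
      · exact congrArg (Proc.rename · f) hX
      · cases h
  | some a =>
    simp only [OptStep, step_rename_iff]
    constructor
    · rintro ⟨b, X', h, -, rfl, rfl⟩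
      exact ⟨some b, X', h, rfl, rfl⟩
    · rintro ⟨_ | b, X', h, he, rfl⟩
      · cases he
      · exact ⟨b, X', h, fun l _ => hf l, Option.some.inj he, rfl⟩

theorem Renaming.getD_map_onAction (f : Renaming) (u : Option Act) :
    (u.map f.onAction).getD ∅ = f.onAction (u.getD ∅) := by
  cases u <;> rfl

theorem Option.exists_getD_eq {α : Type*} {p : Prop} {c d : α} (hc : p → c = d) :
    ∃ b : Option α, (b = none ↔ p) ∧ b.getD d = c := by
  by_cases hp : p
  · exact ⟨none, by simpa using hp, (hc hp).symm⟩
  · exact ⟨some c, by simpa using hp, rfl⟩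

section SyncOn

variable {L : Set Label} [DecidablePred (· ∈ L)]

variable (L) in
def SyncOn (a b c : Act) : Prop :=
  (a.filter (· ∈ L)).image Label.bar = b.filter (· ∈ L) ∧
    Disjoint (a.filter (· ∉ L)) (b.filter (· ∉ L)) ∧
    c = a.filter (· ∉ L) ∪ b.filter (· ∉ L)

theorem filter_mem_union {s t : Act} (hs : ∀ l ∈ s, l ∉ L) (ht : ∀ l ∈ t, l ∈ L) :
    (s ∪ t).filter (· ∈ L) = t := by
  rw [Finset.filter_union, Finset.filter_false_of_mem hs, Finset.filter_true_of_mem ht,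
    Finset.empty_union]

theorem filter_notMem_union {s t : Act} (hs : ∀ l ∈ s, l ∉ L) (ht : ∀ l ∈ t, l ∈ L) :
    (s ∪ t).filter (· ∉ L) = s := by
  rw [Finset.filter_union, Finset.filter_true_of_mem hs,
    Finset.filter_false_of_mem fun l hl => not_not.2 (ht l hl), Finset.union_empty]

theorem syncOn_union {a b c : Act} (hL : ∀ l, l.bar ∈ L ↔ l ∈ L) (ha : ∀ l ∈ a, l ∉ L)
    (hb : ∀ l ∈ b, l ∈ L) (hc : ∀ l ∈ c, l ∉ L) (hac : Disjoint a c) :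
    SyncOn L (a ∪ b) (b.image Label.bar ∪ c) (a ∪ c) := by
  have hb' : ∀ l ∈ b.image Label.bar, l ∈ L := fun l hl =>
    (hL l).1 (hb _ (Label.mem_image_bar.1 hl))
  rw [Finset.union_comm _ c, SyncOn, filter_mem_union ha hb, filter_notMem_union ha hb,
    filter_mem_union hc hb',
    filter_notMem_union hc hb']
  exact ⟨rfl, hac, rfl⟩

theorem SyncOn.right_eq {a b c : Act} (h : SyncOn L a b c) :
    b = (a.filter (· ∈ L)).image Label.bar ∪ b.filter (· ∉ L) := by
  rw [h.1, Finset.filter_union_filter_not_eq]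

theorem SyncOn.notMem {a b c : Act} (h : SyncOn L a b c) {l : Label} (hl : l ∈ c) :
    l ∉ L := by
  rw [h.2.2, Finset.mem_union] at hl
  rcases hl with hl | hl <;> exact (Finset.mem_filter.1 hl).2

theorem SyncOn.eq_of_right_empty {a c : Act} (h : SyncOn L a ∅ c) : c = a := by
  have ha : a.filter (· ∈ L) = ∅ := by simpa using h.1
  rw [h.2.2, Finset.filter_empty, Finset.union_empty]
  nth_rw 2 [← Finset.filter_union_filter_not_eq (· ∈ L) a]
  rw [ha, Finset.empty_union]

theorem SyncOn.eq_of_left_empty {b c : Act} (h : SyncOn L ∅ b c) : c = b := by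
  rw [h.2.2, Finset.filter_empty, Finset.empty_union]
  nth_rw 2 [h.right_eq]
  simp

end SyncOn

section RestrictPar

variable {L : Set Label} [DecidablePred (· ∈ L)] {X Y S : Proc} {c : Act}

-- `hXY` rules out synchronisations on names outside `L`, which the generalized synchronization
-- rule would otherwise allow: the synchronised part of each move is then exactly its part in `L`.
theorem step_restrict_par_iff (hL : ∀ l, l.bar ∈ L ↔ l ∈ L)
    (hXY : ∀ a b X' Y', Step X a X' → Step Y b Y' → ∀ l ∈ a, l.bar ∈ b → l ∈ L) :
    Step ((X.par Y).restrict L) c S ↔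
      ∃ x y X' Y', OptStep X x X' ∧ OptStep Y y Y' ∧ ¬(x = none ∧ y = none) ∧
        S = (X'.par Y').restrict L ∧ SyncOn L (x.getD ∅) (y.getD ∅) c := by
  constructor
  · rintro (_ | _ | ⟨h, hc⟩)
    have hcL : ∀ l ∈ c, l ∉ L := fun l hl => (hc l hl).1
    cases h with
    | parL h =>
      refine ⟨some c, none, _, Y, h, rfl, by simp, rfl, ?_⟩
      simpa using syncOn_union (b := ∅) (c := ∅) hL hcL (by simp) (by simp) (by simp)
    | parR h =>
      refine ⟨none, some c, X, _, rfl, h, by simp, rfl, ?_⟩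
      simpa using syncOn_union (a := ∅) (b := ∅) hL (by simp) (by simp) hcL (by simp)
    | sync hX hY _ _ hac =>
      refine ⟨some _, some _, _, _, hX, hY, by simp, rfl, syncOn_union hL ?_ ?_ ?_ hac⟩
      · exact fun l hl => hcL l (Finset.mem_union_left _ hl)
      · exact fun l hl => hXY _ _ _ _ hX hY l (Finset.mem_union_right _ hl)
          (Finset.mem_union_left _ (Finset.mem_image_of_mem _ hl))
      · exact fun l hl => hcL l (Finset.mem_union_right _ hl)
  · rintro ⟨x, y, X', Y', hx, hy, hne, rfl, hs⟩
    refine .restrict ?_ fun l hl => ⟨hs.notMem hl, (hL l).not.2 (hs.notMem hl)⟩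
    rcases x with _ | a <;> rcases y with _ | b
    · exact absurd ⟨rfl, rfl⟩ hne
    · cases (hx : X' = X)
      exact hs.eq_of_left_empty ▸ .parR hy
    · cases (hy : Y' = Y)
      exact hs.eq_of_right_empty ▸ .parL hx
    · simp only [Option.getD_some] at hs
      have hx' : Step X (a.filter (· ∉ L) ∪ a.filter (· ∈ L)) X' := by
        rwa [Finset.union_comm, Finset.filter_union_filter_not_eq]
      have hy' : Step Y ((a.filter (· ∈ L)).image Label.bar ∪ b.filter (· ∉ L)) Y' :=
        hs.right_eq ▸ hy
      have hab := (Finset.disjoint_filter_filter_not a a (· ∈ L)).symm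
      have hbc : Disjoint ((a.filter (· ∈ L)).image Label.bar) (b.filter (· ∉ L)) := by
        rw [hs.1]; exact Finset.disjoint_filter_filter_not b b _
      exact hs.2.2 ▸ .sync hx' hy' hab hbc hs.2.1

theorem step_rename_restrict_par_iff {f : Renaming} {a : Act} (hL : ∀ l, l.bar ∈ L ↔ l ∈ L)
    (hXY : ∀ a b X' Y', Step X a X' → Step Y b Y' → ∀ l ∈ a, l.bar ∈ b → l ∈ L)
    (hf : ∀ l ∉ L, (f.toFun l).isSome) :
    Step (((X.par Y).restrict L).rename f) a S ↔
      ∃ x y X' Y' c, OptStep X x X' ∧ OptStep Y y Y' ∧ ¬(x = none ∧ y = none) ∧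
        S = ((X'.par Y').restrict L).rename f ∧ SyncOn L (x.getD ∅) (y.getD ∅) c ∧
        a = f.onAction c := by
  rw [step_rename_iff]
  constructor
  · rintro ⟨c, Z, hZ, -, rfl, rfl⟩
    obtain ⟨x, y, X', Y', hx, hy, hne, rfl, hs⟩ := (step_restrict_par_iff hL hXY).1 hZ
    exact ⟨x, y, X', Y', c, hx, hy, hne, rfl, hs, rfl⟩
  · rintro ⟨x, y, X', Y', c, hx, hy, hne, rfl, hs, rfl⟩
    exact ⟨c, _, (step_restrict_par_iff hL hXY).2 ⟨x, y, X', Y', hx, hy, hne, rfl, hs⟩,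
      fun l hl => hf l (hs.notMem hl), rfl, rfl⟩

end RestrictPar

def StepsJointly (F : Proc → Proc → Proc) (C : Option Act → Option Act → Act → Prop) :
    Prop :=
  ∀ A B a S, Step (F A B) a S ↔ ∃ u v A' B', OptStep A u A' ∧ OptStep B v B' ∧
    ¬(u = none ∧ v = none) ∧ S = F A' B' ∧ C u v a

theorem StepsJointly.optStep_iff {F : Proc → Proc → Proc}
    {C : Option Act → Option Act → Act → Prop} (hF : StepsJointly F C) (hC : C none none ∅)
    {A B S : Proc} {x : Option Act} :
    OptStep (F A B) x S ↔ ∃ u v A' B', OptStep A u A' ∧ OptStep B v B' ∧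
      (x = none ↔ u = none ∧ v = none) ∧ S = F A' B' ∧ C u v (x.getD ∅) := by
  cases x with
  | none =>
    constructor
    · rintro rfl
      exact ⟨none, none, A, B, rfl, rfl, by simp, rfl, hC⟩
    · rintro ⟨u, v, A', B', hu, hv, huv, rfl, -⟩
      obtain ⟨rfl, rfl⟩ := huv.1 rfl
      cases (hu : A' = A)
      cases (hv : B' = B)
      rfl
  | some a =>
    simp only [OptStep, hF A B, reduceCtorEq, false_iff, Option.getD_some]

def LappCond (u v : Option Act) (a : Act) : Prop :=
  lInv.onAction (v.getD ∅) = (u.getD ∅).image Label.bar ∧ a = rInv.onAction (v.getD ∅)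

def CompCond (u v : Option Act) (b : Act) : Prop :=
  lInv.onAction (v.getD ∅) = (rInv.onAction (u.getD ∅)).image Label.bar ∧
    b = lRen.onAction (lInv.onAction (u.getD ∅)) ∪ rRen.onAction (rInv.onAction (v.getD ∅))

theorem lappCond_none : LappCond none none ∅ := by simp [LappCond]

theorem compCond_none : CompCond none none ∅ := by simp [CompCond]

theorem syncOn_LabL_lRen_iff {u v c : Act} :
    SyncOn LabL (lRen.onAction u) v c ↔
      lInv.onAction v = u.image Label.bar ∧ c = v.filter (· ∉ LabL) := by
  rw [SyncOn, filter_mem_LabL_lRen, filter_notMem_LabL_lRen, filter_mem_LabL,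
    ← Renaming.onAction_image_bar, (Renaming.onAction_injective lRen_toFun_isSome).eq_iff,
    Finset.empty_union, eq_comm (a := lInv.onAction v)]
  exact and_congr_right' (and_iff_right (Finset.disjoint_empty_left _))

theorem stepsJointly_lapp : StepsJointly lapp LappCond := by
  intro A B a S
  have hXY : ∀ a b A' B', Step (A.rename lRen) a A' → Step B b B' →
      ∀ l ∈ a, l.bar ∈ b → l ∈ LabL := by
    intro a b A' B' hA _ l hl _
    obtain ⟨a, A', -, -, rfl, -⟩ := step_rename_iff.1 hA
    exact (mem_lRen_onAction.1 hl).1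
  rw [lapp, step_rename_restrict_par_iff (by simp) hXY fun l => rInv_toFun_isSome_of_notMem_LabL]
  constructor
  · rintro ⟨x, v, X', B', c, hx, hv, hne, rfl, hs, rfl⟩
    obtain ⟨u, A', hu, rfl, rfl⟩ := (optStep_rename_iff lRen_toFun_isSome).1 hx
    rw [Renaming.getD_map_onAction, syncOn_LabL_lRen_iff] at hs
    obtain ⟨hs, rfl⟩ := hs
    exact ⟨u, v, A', B', hu, hv, by simpa using hne, rfl, hs,
      rInv_onAction_filter_notMem_LabL _⟩
  · rintro ⟨u, v, A', B', hu, hv, hne, rfl, hs, rfl⟩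
    refine ⟨u.map lRen.onAction, v, _, B', _,
      (optStep_rename_iff lRen_toFun_isSome).2 ⟨u, A', hu, rfl, rfl⟩, hv, by simpa using hne,
      rfl, ?_, (rInv_onAction_filter_notMem_LabL _).symm⟩
    rw [Renaming.getD_map_onAction, syncOn_LabL_lRen_iff]
    exact ⟨hs, rfl⟩

theorem syncOn_Lab2_phi12_phi23_iff {u v c : Act} :
    SyncOn Lab2 (phi12.onAction u) (phi23.onAction v) c ↔
      lInv.onAction v = (rInv.onAction u).image Label.bar ∧
        c = (phi12.onAction u).filter (· ∉ Lab2) ∪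
          (phi23.onAction v).filter (· ∉ Lab2) := by
  rw [SyncOn, filter_mem_Lab2_phi12, filter_mem_Lab2_phi23, ← Renaming.onAction_image_bar,
    ← Renaming.onAction_image_bar, (Renaming.onAction_injective phi23_toFun_isSome).eq_iff,
    (Renaming.onAction_injective lRen_toFun_isSome).eq_iff, eq_comm (a := lInv.onAction v)]
  exact and_congr_right' (and_iff_right (disjoint_filter_notMem_Lab2_phi12_phi23 u v))

theorem stepsJointly_comp : StepsJointly comp CompCond := by
  intro A B b S
  have hXY : ∀ a b A' B', Step (A.rename phi12) a A' → Step (B.rename phi23) b B' →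
      ∀ l ∈ a, l.bar ∈ b → l ∈ Lab2 := by
    intro a b A' B' hA hB l hla hlb
    obtain ⟨a, A', -, -, rfl, -⟩ := step_rename_iff.1 hA
    obtain ⟨b, B', -, -, rfl, -⟩ := step_rename_iff.1 hB
    simp only [mem_phi12_onAction, mem_phi23_onAction, Label.name_bar] at hla hlb
    simp only [mem_Lab2]
    omega
  rw [comp,
    step_rename_restrict_par_iff (by simp) hXY fun l => phi13Inv_toFun_isSome_of_notMem_Lab2]
  constructor
  · rintro ⟨x, y, X', Y', c, hx, hy, hne, rfl, hs, rfl⟩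
    obtain ⟨u, A', hu, rfl, rfl⟩ := (optStep_rename_iff phi12_toFun_isSome).1 hx
    obtain ⟨v, B', hv, rfl, rfl⟩ := (optStep_rename_iff phi23_toFun_isSome).1 hy
    rw [Renaming.getD_map_onAction, Renaming.getD_map_onAction,
      syncOn_Lab2_phi12_phi23_iff] at hs
    obtain ⟨hs, rfl⟩ := hs
    exact ⟨u, v, A', B', hu, hv, by simpa using hne, rfl, hs,
      phi13Inv_onAction_filter_notMem_Lab2 _ _⟩
  · rintro ⟨u, v, A', B', hu, hv, hne, rfl, hs, rfl⟩
    refine ⟨u.map phi12.onAction, v.map phi23.onAction, _, _, _,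
      (optStep_rename_iff phi12_toFun_isSome).2 ⟨u, A', hu, rfl, rfl⟩,
      (optStep_rename_iff phi23_toFun_isSome).2 ⟨v, B', hv, rfl, rfl⟩, by simpa using hne, rfl,
      ?_, (phi13Inv_onAction_filter_notMem_Lab2 _ _).symm⟩
    rw [Renaming.getD_map_onAction, Renaming.getD_map_onAction, syncOn_Lab2_phi12_phi23_iff]
    exact ⟨hs, rfl⟩

def Chained (u v w : Option Act) (a : Act) : Prop :=
  ¬(u = none ∧ v = none ∧ w = none) ∧
    lInv.onAction (v.getD ∅) = (u.getD ∅).image Label.bar ∧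
    lInv.onAction (w.getD ∅) = (rInv.onAction (v.getD ∅)).image Label.bar ∧
    a = rInv.onAction (w.getD ∅)

theorem step_lapp_comp_iff {P Q R S : Proc} {a : Act} :
    Step (lapp P (comp Q R)) a S ↔ ∃ u v w P' Q' R', OptStep P u P' ∧ OptStep Q v Q' ∧
      OptStep R w R' ∧ S = lapp P' (comp Q' R') ∧ Chained u v w a := by
  simp only [stepsJointly_lapp _ _ a S, stepsJointly_comp.optStep_iff compCond_none]
  constructor
  · rintro ⟨u, b, P', _, hu, ⟨v, w, Q', R', hv, hw, hb, rfl, hvw, hbc⟩, hne, rfl, hub, rfl⟩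
    refine ⟨u, v, w, P', Q', R', hu, hv, hw, rfl, ?_, ?_, hvw, ?_⟩
    · rintro ⟨rfl, hvw'⟩
      exact hne ⟨rfl, hb.2 hvw'⟩
    · rwa [hbc, lInv_onAction_lRen_union_rRen] at hub
    · rw [hbc, rInv_onAction_lRen_union_rRen]
  · rintro ⟨u, v, w, P', Q', R', hu, hv, hw, rfl, hne, huv, hvw, rfl⟩
    obtain ⟨b, hb, hbc⟩ := Option.exists_getD_eq (p := v = none ∧ w = none) (d := ∅)
      (c := lRen.onAction (lInv.onAction (v.getD ∅)) ∪
        rRen.onAction (rInv.onAction (w.getD ∅)))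
      (by rintro ⟨rfl, rfl⟩; simp)
    refine ⟨u, b, P', _, hu, ⟨v, w, Q', R', hv, hw, hb, rfl, hvw, hbc⟩, ?_, rfl, ?_, ?_⟩
    · rintro ⟨rfl, hb'⟩
      exact hne ⟨rfl, hb.1 hb'⟩
    · rwa [hbc, lInv_onAction_lRen_union_rRen]
    · rw [hbc, rInv_onAction_lRen_union_rRen]

theorem step_lapp_lapp_iff {P Q R S : Proc} {a : Act} :
    Step (lapp (lapp P Q) R) a S ↔ ∃ u v w P' Q' R', OptStep P u P' ∧ OptStep Q v Q' ∧
      OptStep R w R' ∧ S = lapp (lapp P' Q') R' ∧ Chained u v w a := by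
  simp only [stepsJointly_lapp _ _ a S, stepsJointly_lapp.optStep_iff lappCond_none]
  constructor
  · rintro ⟨m, w, _, R', ⟨u, v, P', Q', hu, hv, hm, rfl, huv, hmv⟩, hw, hne, rfl, hmw, rfl⟩
    refine ⟨u, v, w, P', Q', R', hu, hv, hw, rfl, ?_, huv, hmv ▸ hmw, rfl⟩
    rintro ⟨hu0, hv0, rfl⟩
    exact hne ⟨hm.2 ⟨hu0, hv0⟩, rfl⟩
  · rintro ⟨u, v, w, P', Q', R', hu, hv, hw, rfl, hne, huv, hvw, rfl⟩
    obtain ⟨m, hm, hmv⟩ := Option.exists_getD_eq (p := u = none ∧ v = none) (d := ∅)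
      (c := rInv.onAction (v.getD ∅)) (by rintro ⟨-, rfl⟩; rfl)
    refine ⟨m, w, _, R', ⟨u, v, P', Q', hu, hv, hm, rfl, huv, hmv⟩, hw, ?_, rfl, hmv ▸ hvw,
      rfl⟩
    rintro ⟨hm0, rfl⟩
    obtain ⟨rfl, rfl⟩ := hm.1 hm0
    exact hne ⟨rfl, rfl, rfl⟩

def IsStrongSim (R : Proc → Proc → Prop) : Prop :=
  ∀ ⦃X Y⦄, R X Y → ∀ ⦃a X'⦄, Step X a X' → ∃ Y', Step Y a Y' ∧ R X' Y'

section Simulation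

variable {R : Proc → Proc → Prop} {X X' Y : Proc}

theorem IsStrongSim.tauStar (hR : IsStrongSim R) (h : TauStar X X') (hXY : R X Y) :
    ∃ Y', TauStar Y Y' ∧ R X' Y' := by
  induction h with
  | refl => exact ⟨Y, .refl, hXY⟩
  | tail _ hs ih =>
    obtain ⟨Y₁, hY₁, h₁⟩ := ih
    obtain ⟨Y₂, hY₂, h₂⟩ := hR h₁ hs
    exact ⟨Y₂, hY₁.tail hY₂, h₂⟩

theorem IsStrongSim.obs (hR : IsStrongSim R) {a : Act} (h : Obs X a X') (hXY : R X Y) :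
    ∃ Y', Obs Y a Y' ∧ R X' Y' := by
  obtain ⟨X₁, X₂, h₁, h₂, h₃⟩ := h
  obtain ⟨Y₁, hY₁, r₁⟩ := hR.tauStar h₁ hXY
  obtain ⟨Y₂, hY₂, r₂⟩ := hR r₁ h₂
  obtain ⟨Y₃, hY₃, r₃⟩ := hR.tauStar h₃ r₂
  exact ⟨Y₃, ⟨Y₁, Y₂, hY₁, hY₂, hY₃⟩, r₃⟩

theorem IsStrongSim.isWeakSim (hR : IsStrongSim R) : IsWeakSim R :=
  fun _ _ hXY => ⟨fun _ h => hR.tauStar h hXY, fun _ _ _ h => hR.obs h hXY⟩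

theorem IsWeakSim.obsSeq (hR : IsWeakSim R) {s : List Act} (h : ObsSeq X s X')
    (hs : ∀ a ∈ s, a.Nonempty) (hXY : R X Y) : ∃ Y', ObsSeq Y s Y' ∧ R X' Y' := by
  induction h generalizing Y with
  | nil h =>
    obtain ⟨Y', hY, r⟩ := (hR hXY).1 _ h
    exact ⟨Y', .nil hY, r⟩
  | cons h _ ih =>
    obtain ⟨Y₁, hY₁, r₁⟩ := (hR hXY).2 _ _ (hs _ List.mem_cons_self) h
    obtain ⟨Y₂, hY₂, r₂⟩ := ih (fun a ha => hs a (List.mem_cons_of_mem _ ha)) r₁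
    exact ⟨Y₂, .cons hY₁ hY₂, r₂⟩

theorem failures_subset_of_isWeakSim (hR : IsWeakSim R) (hR' : IsWeakSim fun x y => R y x)
    (hXY : R X Y) : failures X ⊆ failures Y := by
  rintro ⟨s, F⟩ ⟨hs, hF, X', hX', hX'F⟩
  obtain ⟨Y', hY', r⟩ := hR.obsSeq hX' hs hXY
  refine ⟨hs, hF, Y', hY', fun a ha ⟨Z, hZ⟩ => ?_⟩
  obtain ⟨Z', hZ', -⟩ := (hR' r).2 a Z (hF a ha) hZ
  exact hX'F a ha ⟨Z', hZ'⟩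

end Simulation

theorem WeakBisim.failEq {P Q : Proc} (h : WeakBisim P Q) : FailEq P Q := by
  obtain ⟨R, hR, hR', hPQ⟩ := h
  exact (failures_subset_of_isWeakSim hR hR' hPQ).antisymm
    (failures_subset_of_isWeakSim hR' hR hPQ)

/-- **Left application is compatible with composition**:
`⟨P | (Q ; R)⟩ ≈_f ⟨⟨P | Q⟩ | R⟩`. -/
theorem lapp_comp_failures (P Q R : Proc) :
    FailEq (lapp P (comp Q R)) (lapp (lapp P Q) R) := by
  let Rel (X Y : Proc) : Prop := ∃ p q r, X = lapp p (comp q r) ∧ Y = lapp (lapp p q) r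
  refine WeakBisim.failEq
    ⟨Rel, IsStrongSim.isWeakSim ?_, IsStrongSim.isWeakSim ?_, P, Q, R, rfl, rfl⟩
  · rintro _ _ ⟨p, q, r, rfl, rfl⟩ a X' h
    obtain ⟨u, v, w, p', q', r', hu, hv, hw, rfl, hc⟩ := step_lapp_comp_iff.1 h
    exact ⟨_, step_lapp_lapp_iff.2 ⟨u, v, w, p', q', r', hu, hv, hw, rfl, hc⟩,
      p', q', r', rfl, rfl⟩
  · rintro _ _ ⟨p, q, r, rfl, rfl⟩ a X' h
    obtain ⟨u, v, w, p', q', r', hu, hv, hw, rfl, hc⟩ := step_lapp_lapp_iff.1 h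
    exact ⟨_, step_lapp_comp_iff.2 ⟨u, v, w, p', q', r', hu, hv, hw, rfl, hc⟩,
      p', q', r', rfl, rfl⟩
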